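/- Let A ∈ ℝ^{r×n} and B ∈ ℝ^{h×r} with r ≥ 1, and let Λ = A·Aᵀ − Bᵀ·B ∈ ℝ^{r×r}. Then, with ‖·‖ the spectral norm and ‖·‖_F the Frobenius norm: (i) ‖B·A‖ ≤ ½(‖A‖_F² + ‖B‖_F²); and (ii) ‖A‖_F² + ‖B‖_F² ≤ 2r²·‖Λ‖ + 2r·‖B·A‖. -/

import Mathlib

open Matrix Finset

noncomputable def frobSq {m n : Type*} [Fintype m] [Fintype n]
    (A : Matrix m n ℝ) : ℝ :=
  ∑ i, ∑ j, A i j ^ 2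

noncomputable def specNorm {m n : Type*} [Fintype m] [Fintype n] [DecidableEq n]
    (A : Matrix m n ℝ) : ℝ :=
  ‖LinearMap.toContinuousLinearMap (Matrix.toEuclideanLin A)‖

lemma euc_norm_eq {k : ℕ} (v : Fin k → ℝ) :
    ‖(WithLp.equiv 2 (Fin k → ℝ)).symm v‖ = Real.sqrt (∑ i, v i ^ 2) := by
  rw [EuclideanSpace.norm_eq]
  congr 1
  refine Finset.sum_congr rfl fun i _ => ?_
  rw [Real.norm_eq_abs, sq_abs]
  rfl

lemma spec_bound {a b : ℕ} (M : Matrix (Fin a) (Fin b) ℝ) (v : Fin b → ℝ) :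
    Real.sqrt (∑ i, (M *ᵥ v) i ^ 2) ≤ specNorm M * Real.sqrt (∑ j, v j ^ 2) := by
  have h := (LinearMap.toContinuousLinearMap (Matrix.toEuclideanLin M)).le_opNorm
      ((WithLp.equiv 2 (Fin b → ℝ)).symm v)
  rw [LinearMap.coe_toContinuousLinearMap'] at h
  rw [(show ∀ w, Matrix.toEuclideanLin M ((WithLp.equiv 2 _).symm w) = (WithLp.equiv 2 _).symm (M *ᵥ w) from fun _ => rfl), euc_norm_eq, euc_norm_eq] at h
  exact h

lemma frobSq_nonneg {m n : Type*} [Fintype m] [Fintype n] (M : Matrix m n ℝ) :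
    0 ≤ frobSq M := by
  unfold frobSq; positivity

lemma spec_nonneg {a b : ℕ} (M : Matrix (Fin a) (Fin b) ℝ) : 0 ≤ specNorm M :=
  norm_nonneg _

lemma spec_bound_sq {a b : ℕ} (M : Matrix (Fin a) (Fin b) ℝ) (v : Fin b → ℝ) :
    ∑ i, (M *ᵥ v) i ^ 2 ≤ specNorm M ^ 2 * ∑ j, v j ^ 2 := by
  have h := spec_bound M v
  have h2 := pow_le_pow_left₀ (Real.sqrt_nonneg _) h 2
  rw [Real.sq_sqrt (by positivity), mul_pow, Real.sq_sqrt (by positivity)] at h2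
  exact h2

lemma frob_bound_sq {a b : ℕ} (M : Matrix (Fin a) (Fin b) ℝ) (v : Fin b → ℝ) :
    ∑ i, (M *ᵥ v) i ^ 2 ≤ frobSq M * ∑ j, v j ^ 2 := by
  rw [frobSq, Finset.sum_mul]
  refine Finset.sum_le_sum fun i _ => ?_
  have := Finset.sum_mul_sq_le_sq_mul_sq Finset.univ (fun j => M i j) v
  simpa [Matrix.mulVec, dotProduct] using this

lemma spec_le_sqrt_frob {a b : ℕ} (M : Matrix (Fin a) (Fin b) ℝ) :
    specNorm M ≤ Real.sqrt (frobSq M) := by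
  rw [specNorm]
  refine ContinuousLinearMap.opNorm_le_bound _ (Real.sqrt_nonneg _) fun x => ?_
  obtain ⟨v, rfl⟩ : ∃ v : Fin b → ℝ, (WithLp.equiv 2 (Fin b → ℝ)).symm v = x :=
    ⟨WithLp.equiv 2 _ x, (WithLp.equiv 2 _).symm_apply_apply x⟩
  rw [LinearMap.coe_toContinuousLinearMap', (show ∀ w, Matrix.toEuclideanLin M ((WithLp.equiv 2 _).symm w) = (WithLp.equiv 2 _).symm (M *ᵥ w) from fun _ => rfl),
    euc_norm_eq, euc_norm_eq, ← Real.sqrt_mul (frobSq_nonneg M)]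
  exact Real.sqrt_le_sqrt (frob_bound_sq M v)

lemma spec_mul_le {a b c : ℕ} (B : Matrix (Fin a) (Fin b) ℝ) (A : Matrix (Fin b) (Fin c) ℝ) :
    specNorm (B * A) ≤ Real.sqrt (frobSq B) * Real.sqrt (frobSq A) := by
  rw [specNorm]
  refine ContinuousLinearMap.opNorm_le_bound _ (mul_nonneg (Real.sqrt_nonneg _) (Real.sqrt_nonneg _)) fun x => ?_
  obtain ⟨v, rfl⟩ : ∃ v : Fin c → ℝ, (WithLp.equiv 2 (Fin c → ℝ)).symm v = x :=
    ⟨WithLp.equiv 2 _ x, (WithLp.equiv 2 _).symm_apply_apply x⟩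
  rw [LinearMap.coe_toContinuousLinearMap', (show ∀ w, Matrix.toEuclideanLin (B * A) ((WithLp.equiv 2 _).symm w) = (WithLp.equiv 2 _).symm ((B * A) *ᵥ w) from fun _ => rfl),
    euc_norm_eq, euc_norm_eq]
  have h1 : ∑ i, ((B * A) *ᵥ v) i ^ 2 ≤ frobSq B * (frobSq A * ∑ j, v j ^ 2) := by
    rw [← Matrix.mulVec_mulVec]
    exact le_trans (frob_bound_sq B (A *ᵥ v))
      (by have := frob_bound_sq A v
          nlinarith [this, (frobSq_nonneg B)])
  calc Real.sqrt (∑ i, ((B * A) *ᵥ v) i ^ 2)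
      ≤ Real.sqrt (frobSq B * (frobSq A * ∑ j, v j ^ 2)) := Real.sqrt_le_sqrt h1
    _ = Real.sqrt (frobSq B) * (Real.sqrt (frobSq A) * Real.sqrt (∑ j, v j ^ 2)) := by
        rw [Real.sqrt_mul (frobSq_nonneg B), Real.sqrt_mul (frobSq_nonneg A)]
    _ = _ := by ring

lemma final_arith (S L C R : ℝ) (hS0 : 0 ≤ S) (hL0 : 0 ≤ L) (hC0 : 0 ≤ C)
    (hR : 1 ≤ R) (key : S ^ 2 ≤ R ^ 2 * L ^ 2 + 2 * R * C * S) :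
    S ≤ 2 * R ^ 2 * L + 2 * R * C := by
  have hr0 : (0:ℝ) ≤ R := le_trans zero_le_one hR
  rcases le_or_gt S (R * L) with h1 | h1
  · nlinarith [mul_nonneg hC0 hr0,
      mul_nonneg hL0 (show (0:ℝ) ≤ 2 * R ^ 2 - R by nlinarith)]
  · have hrL0 : 0 ≤ R * L := mul_nonneg hr0 hL0
    have h2 : R ^ 2 * L ^ 2 ≤ R * L * S := by
      nlinarith [mul_le_mul_of_nonneg_left h1.le hrL0]
    have h3 : S * S ≤ (R * L + 2 * R * C) * S := by nlinarith [key, h2]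
    have hSpos : 0 < S := lt_of_le_of_lt hrL0 h1
    have h4 : S ≤ R * L + 2 * R * C :=
      le_of_mul_le_mul_right (by linarith [h3]) hSpos
    nlinarith [mul_nonneg hL0 (show (0:ℝ) ≤ 2 * R ^ 2 - R by nlinarith)]

lemma am_gm_sqrt {a b : ℝ} (ha : 0 ≤ a) (hb : 0 ≤ b) :
    Real.sqrt a * Real.sqrt b ≤ (a + b) / 2 := by
  nlinarith [sq_nonneg (Real.sqrt a - Real.sqrt b), Real.sq_sqrt ha, Real.sq_sqrt hb,
    Real.sqrt_nonneg a, Real.sqrt_nonneg b]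

/-- With `Λ = AAᵀ − BᵀB` the balancedness invariant,
(i) `‖BA‖ ≤ ½(‖A‖_F² + ‖B‖_F²)`, and (ii) `‖A‖_F² + ‖B‖_F² ≤ 2r²‖Λ‖ + 2r‖BA‖`. -/
theorem balancedness_norm_bounds (h n r : ℕ) (hr : 1 ≤ r)
    (A : Matrix (Fin r) (Fin n) ℝ) (B : Matrix (Fin h) (Fin r) ℝ)
    (Λ : Matrix (Fin r) (Fin r) ℝ) (hΛ : Λ = A * Aᵀ - Bᵀ * B) :
    specNorm (B * A) ≤ (1 / 2) * (frobSq A + frobSq B) ∧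
    frobSq A + frobSq B ≤ 2 * (r : ℝ) ^ 2 * specNorm Λ + 2 * (r : ℝ) * specNorm (B * A) := by
  have hfA0 : 0 ≤ frobSq A := frobSq_nonneg A
  have hfB0 : 0 ≤ frobSq B := frobSq_nonneg B
  have hC0 : 0 ≤ specNorm (B * A) := spec_nonneg _
  have hL0 : 0 ≤ specNorm Λ := spec_nonneg _
  have hr' : (1:ℝ) ≤ (r:ℝ) := by exact_mod_cast hr
  constructor
  · have h1 := spec_mul_le B A
    nlinarith [Real.sq_sqrt hfA0, Real.sq_sqrt hfB0,
      sq_nonneg (Real.sqrt (frobSq A) - Real.sqrt (frobSq B)),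
      Real.sqrt_nonneg (frobSq A), Real.sqrt_nonneg (frobSq B)]
  · -- notation
    set X : Fin r → Fin r → ℝ := fun k l => ∑ j, A k j * A l j with hX
    set Y : Fin r → Fin r → ℝ := fun k l => ∑ i, B i k * B i l with hY
    have hΛe : ∀ k l, Λ k l = X k l - Y k l := by
      intro k l
      simp [hΛ, Matrix.sub_apply, Matrix.mul_apply, Matrix.transpose_apply, hX, hY]
    have hBcomm : frobSq B = ∑ k, ∑ i, B i k ^ 2 := by
      rw [frobSq]; exact Finset.sum_comm
    -- trace identity
    have htr : frobSq A + frobSq B = ∑ k, (X k k + Y k k) := by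
      rw [Finset.sum_add_distrib, frobSq, hBcomm]
      congr 1
      · exact Finset.sum_congr rfl fun k _ => Finset.sum_congr rfl fun j _ => (sq (A k j))
      · exact Finset.sum_congr rfl fun k _ => Finset.sum_congr rfl fun i _ => (sq (B i k))
    -- Chebyshev
    have hb : (frobSq A + frobSq B)^2 ≤ (r:ℝ) * ∑ k, (X k k + Y k k)^2 := by
      rw [htr]
      have := sq_sum_le_card_mul_sum_sq (s := (Finset.univ : Finset (Fin r)))
        (f := fun k => X k k + Y k k)
      simpa using this
    -- diagonal ≤ full sum
    have hdiag : ∑ k, (X k k + Y k k)^2 ≤ ∑ k, ∑ l, (X k l + Y k l)^2 := by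
      refine Finset.sum_le_sum fun k _ => ?_
      exact Finset.single_le_sum (f := fun l => (X k l + Y k l)^2)
        (fun l _ => sq_nonneg _) (Finset.mem_univ k)
    -- expansion
    have hexp : ∑ k, ∑ l, (X k l + Y k l)^2
        = frobSq Λ + 4 * ∑ k, ∑ l, X k l * Y k l := by
      have hpt : ∀ k l, (X k l + Y k l)^2 = Λ k l ^ 2 + 4 * (X k l * Y k l) := by
        intro k l; rw [hΛe]; ring
      rw [frobSq, Finset.mul_sum, ← Finset.sum_add_distrib]
      refine Finset.sum_congr rfl fun k _ => ?_
      rw [Finset.mul_sum, ← Finset.sum_add_distrib]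
      exact Finset.sum_congr rfl fun l _ => hpt k l
    -- Frobenius of Λ vs spectral
    have hfrobΛ : frobSq Λ ≤ (r:ℝ) * specNorm Λ ^ 2 := by
      have hcol : ∀ l, ∑ k, Λ k l ^ 2 ≤ specNorm Λ ^ 2 := by
        intro l
        have h1 := spec_bound_sq Λ (Pi.single l 1)
        have h2 : ∀ k, (Λ *ᵥ Pi.single l 1) k = Λ k l := by
          intro k
          simp [Matrix.mulVec, dotProduct, Pi.single_apply]
        have h3 : ∑ j, (Pi.single l 1 : Fin r → ℝ) j ^ 2 = 1 := by
          simp [Pi.single_apply]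
        rw [h3, mul_one] at h1
        calc ∑ k, Λ k l ^ 2 = ∑ k, (Λ *ᵥ Pi.single l 1) k ^ 2 :=
              Finset.sum_congr rfl fun k _ => by rw [h2]
          _ ≤ _ := h1
      have : frobSq Λ = ∑ l, ∑ k, Λ k l ^ 2 := by rw [frobSq]; exact Finset.sum_comm
      rw [this]
      calc ∑ l : Fin r, ∑ k, Λ k l ^ 2 ≤ ∑ l : Fin r, specNorm Λ ^ 2 :=
            Finset.sum_le_sum fun l _ => hcol l
        _ = (r:ℝ) * specNorm Λ ^ 2 := by simp [mul_comm]
    -- the key trace bound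
    have hT : ∑ k, ∑ l, X k l * Y k l
        ≤ specNorm (B * A) * ((frobSq A + frobSq B) / 2) := by
      have hk : ∀ k : Fin r, ∑ l, X k l * Y k l
          ≤ specNorm (B * A) * ((∑ j, A k j ^ 2 + ∑ i, B i k ^ 2) / 2) := by
        intro k
        set u : Fin n → ℝ := fun j => A k j with hu
        have hAv : ∀ l, (A *ᵥ u) l = X k l := by
          intro l
          simp only [Matrix.mulVec, dotProduct, hX, hu]
          exact Finset.sum_congr rfl fun j _ => by ring
        have e1 : ∑ l, X k l * Y k l = ∑ i, B i k * ((B * A) *ᵥ u) i := by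
          symm
          calc ∑ i, B i k * ((B * A) *ᵥ u) i
              = ∑ i, ∑ l, B i k * (B i l * (A *ᵥ u) l) := by
                rw [← Matrix.mulVec_mulVec]
                refine Finset.sum_congr rfl fun i _ => ?_
                have : (B *ᵥ (A *ᵥ u)) i = ∑ l, B i l * (A *ᵥ u) l := by
                  simp [Matrix.mulVec, dotProduct]
                rw [this, Finset.mul_sum]
            _ = ∑ l, ∑ i, B i k * (B i l * (A *ᵥ u) l) := Finset.sum_comm
            _ = ∑ l, (∑ i, B i k * B i l) * (A *ᵥ u) l := by
                refine Finset.sum_congr rfl fun l _ => ?_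
                rw [Finset.sum_mul]
                exact Finset.sum_congr rfl fun i _ => by ring
            _ = ∑ l, X k l * Y k l := by
                refine Finset.sum_congr rfl fun l _ => ?_
                rw [hAv l]
                simp only [hY]
                ring
        have e2 : ∑ i, B i k * ((B * A) *ᵥ u) i
            ≤ Real.sqrt (∑ i, B i k ^ 2) * Real.sqrt (∑ i, ((B * A) *ᵥ u) i ^ 2) := by
          have hcs := Finset.sum_mul_sq_le_sq_mul_sq Finset.univ
            (fun i => B i k) (fun i => ((B * A) *ᵥ u) i)
          have habs := Real.abs_le_sqrt hcs
          rw [Real.sqrt_mul (by positivity)] at habs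
          exact le_trans (le_abs_self _) habs
        have e3 : Real.sqrt (∑ i, ((B * A) *ᵥ u) i ^ 2)
            ≤ specNorm (B * A) * Real.sqrt (∑ j, u j ^ 2) := spec_bound _ u
        have e4 : Real.sqrt (∑ i, B i k ^ 2) * Real.sqrt (∑ j, u j ^ 2)
            ≤ (∑ i, B i k ^ 2 + ∑ j, u j ^ 2) / 2 :=
          am_gm_sqrt (by positivity) (by positivity)
        have hu2 : ∑ j, u j ^ 2 = ∑ j, A k j ^ 2 := rfl
        calc ∑ l, X k l * Y k l = ∑ i, B i k * ((B * A) *ᵥ u) i := e1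
          _ ≤ Real.sqrt (∑ i, B i k ^ 2) * Real.sqrt (∑ i, ((B * A) *ᵥ u) i ^ 2) := e2
          _ ≤ Real.sqrt (∑ i, B i k ^ 2) * (specNorm (B * A) * Real.sqrt (∑ j, u j ^ 2)) :=
              mul_le_mul_of_nonneg_left e3 (Real.sqrt_nonneg _)
          _ = specNorm (B * A) * (Real.sqrt (∑ i, B i k ^ 2) * Real.sqrt (∑ j, u j ^ 2)) := by
              ring
          _ ≤ specNorm (B * A) * ((∑ i, B i k ^ 2 + ∑ j, u j ^ 2) / 2) :=
              mul_le_mul_of_nonneg_left e4 hC0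
          _ = specNorm (B * A) * ((∑ j, A k j ^ 2 + ∑ i, B i k ^ 2) / 2) := by
              rw [hu2]; ring
      calc ∑ k, ∑ l, X k l * Y k l
          ≤ ∑ k, specNorm (B * A) * ((∑ j, A k j ^ 2 + ∑ i, B i k ^ 2) / 2) :=
            Finset.sum_le_sum fun k _ => hk k
        _ = specNorm (B * A) * ((frobSq A + frobSq B) / 2) := by
            rw [← Finset.mul_sum]
            congr 1
            rw [frobSq, hBcomm, ← Finset.sum_add_distrib, Finset.sum_div]
    -- assemble key inequality
    have key : (frobSq A + frobSq B)^2
        ≤ (r:ℝ)^2 * specNorm Λ ^ 2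
          + 2 * (r:ℝ) * specNorm (B * A) * (frobSq A + frobSq B) := by
      have step : ∑ k, (X k k + Y k k)^2
          ≤ (r:ℝ) * specNorm Λ ^ 2 + 2 * specNorm (B * A) * (frobSq A + frobSq B) := by
        calc ∑ k, (X k k + Y k k)^2 ≤ ∑ k, ∑ l, (X k l + Y k l)^2 := hdiag
          _ = frobSq Λ + 4 * ∑ k, ∑ l, X k l * Y k l := hexp
          _ ≤ (r:ℝ) * specNorm Λ ^ 2
              + 4 * (specNorm (B * A) * ((frobSq A + frobSq B) / 2)) := by
              have := hT
              nlinarith [hfrobΛ, hT]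
          _ = (r:ℝ) * specNorm Λ ^ 2 + 2 * specNorm (B * A) * (frobSq A + frobSq B) := by
              ring
      have hr0 : (0:ℝ) ≤ (r:ℝ) := by positivity
      nlinarith [hb, mul_le_mul_of_nonneg_left step hr0]
    exact final_arith _ _ _ _ (add_nonneg hfA0 hfB0) hL0 hC0 hr' key
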